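/- Let A be a commutative ring and E an A-module that is mixed, i.e., E has a nonzero torsion element and a nonzero element with zero annihilator. Then the trivial ring extension A ⋉ E is not a valuation ring. -/

import Mathlib

/-!
In `A ⋉ E`, `inr x ∣ inr y` just says that `y` is an `A`-multiple of `x`. Take `x ≠ 0`
with `a • x = 0` for some `a ≠ 0`, and `u` with zero annihilator. Then `inr x ∤ inr u`, since
every multiple of `x` is killed by `a`; so comparability forces `x = c • u`, with `c ≠ 0` and
`a * c = 0`. Now `inr u ∤ inl c` because `inr u` lies in the ideal `0 ⋉ E`, while
`inl c ∣ inr u` would make `u` of the form `c • n`, hence killed by `a`.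
-/

universe u

namespace TrivSqZeroExt

variable {R M : Type*} [Semiring R] [AddCommMonoid M] [Module R M] [Module Rᵐᵒᵖ M]
  [SMulCommClass R Rᵐᵒᵖ M]

theorem eq_zero_of_inr_dvd_inl {m : M} {r : R} (h : (inr m : TrivSqZeroExt R M) ∣ inl r) :
    r = 0 := by
  obtain ⟨c, hc⟩ := h
  simpa using congrArg fst hc

theorem inl_dvd_inr_iff {r : R} {m : M} :
    (inl r : TrivSqZeroExt R M) ∣ inr m ↔ ∃ n : M, r • n = m := by
  constructor
  · rintro ⟨c, hc⟩
    exact ⟨c.snd, by simpa using (congrArg snd hc).symm⟩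
  · rintro ⟨n, rfl⟩
    exact ⟨inr n, (inl_mul_inr r n).symm⟩

theorem inr_dvd_inr_iff [IsCentralScalar R M] {m n : M} :
    (inr m : TrivSqZeroExt R M) ∣ inr n ↔ ∃ c : R, c • m = n := by
  constructor
  · rintro ⟨c, hc⟩
    exact ⟨c.fst, by simpa [op_smul_eq_smul] using (congrArg snd hc).symm⟩
  · rintro ⟨c, rfl⟩
    exact ⟨inl c, by rw [inr_mul_inl, op_smul_eq_smul]⟩

end TrivSqZeroExt

open TrivSqZeroExt

/-- If `E` is a mixed `A`-module (it has a nonzero torsion element and a nonzero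
element with zero annihilator), then the trivial ring extension `A ⋉ E` is not a
valuation ring. -/
theorem stmt8 (A : Type u) [CommRing A] (E : Type u) [AddCommGroup E] [Module A E]
    [Module Aᵐᵒᵖ E] [IsCentralScalar A E]
    (htor : ∃ x : E, x ≠ 0 ∧ ∃ a : A, a ≠ 0 ∧ a • x = 0)
    (hfree : ∃ u : E, u ≠ 0 ∧ ∀ a : A, a • u = 0 → a = 0) :
    ¬ ∀ r s : TrivSqZeroExt A E, r ∣ s ∨ s ∣ r := by
  obtain ⟨x, hx, a, ha, hax⟩ := htor
  obtain ⟨u, -, hu⟩ := hfree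
  intro hcomp
  have hxu : ¬ (inr x : TrivSqZeroExt A E) ∣ inr u := by
    rw [inr_dvd_inr_iff]
    rintro ⟨c, rfl⟩
    exact ha (hu a (by rw [smul_comm, hax, smul_zero]))
  obtain ⟨c, rfl⟩ := inr_dvd_inr_iff.1 ((hcomp _ _).resolve_left hxu)
  have hac : a * c = 0 := hu _ (by rw [mul_smul, hax])
  rcases hcomp (inl c) (inr u) with hcu | huc
  · obtain ⟨n, rfl⟩ := inl_dvd_inr_iff.1 hcu
    exact ha (hu a (by rw [smul_smul, hac, zero_smul]))
  · exact hx (by rw [eq_zero_of_inr_dvd_inl huc, zero_smul])
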